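/- Let μ be a partition. Removing a connected rim hook from μ (yielding a partition) corresponds bijectively to flipping a wb pair in the weight diagram x_μ: every flip of a wb pair that results in a weight diagram of a partition λ gives a rim hook μ/λ, and every rim hook removal arises from a unique such flip. -/

import Mathlib

open Finset

/-- The content of a box in position `(i, j)` is `j - i`. -/
def content (b : ℕ × ℕ) : ℤ := (b.2 : ℤ) - (b.1 : ℤ)

/-- The anticontent of a box in position `(i, j)` is `i + j`. -/
def anticontent (b : ℕ × ℕ) : ℤ := (b.1 : ℤ) + (b.2 : ℤ)

/-- Two boxes are adjacent if they share a side. -/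
def BoxAdj (a b : ℕ × ℕ) : Prop :=
  (a.1 = b.1 ∧ (a.2 + 1 = b.2 ∨ b.2 + 1 = a.2)) ∨
  (a.2 = b.2 ∧ (a.1 + 1 = b.1 ∨ b.1 + 1 = a.1))

/-- A finite set of boxes is connected if any two boxes are linked by a chain of
adjacent boxes inside the set. -/
def IsConnectedBoxes (S : Finset (ℕ × ℕ)) : Prop :=
  ∀ a ∈ S, ∀ b ∈ S,
    Relation.ReflTransGen (fun x y => x ∈ S ∧ y ∈ S ∧ BoxAdj x y) a b

/-- A skew Young diagram: the difference of two Young diagrams `l ⊆ m`. -/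
def IsSkew (S : Finset (ℕ × ℕ)) : Prop :=
  ∃ l m : YoungDiagram, l ≤ m ∧ S = m.cells \ l.cells

/-- A hook: a nonempty connected skew Young diagram with no two boxes of the same content. -/
def IsHook (S : Finset (ℕ × ℕ)) : Prop :=
  IsSkew S ∧ S.Nonempty ∧ IsConnectedBoxes S ∧
    ∀ a ∈ S, ∀ b ∈ S, content a = content b → a = b

/-- Height: number of rows occupied. -/
def ht (S : Finset (ℕ × ℕ)) : ℕ := (S.image Prod.fst).card

/-- Width: number of columns occupied. -/
def wd (S : Finset (ℕ × ℕ)) : ℕ := (S.image Prod.snd).card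

/-- The sequence `x_λ = (λ₁, λ₂ − 1, λ₃ − 2, …)` (indexed from `0`). -/
def xseq (μ : YoungDiagram) (k : ℕ) : ℤ := (μ.rowLen k : ℤ) - (k : ℤ)

/-- `lam` is obtained from `μ` by flipping the wb pair `(lw, lb)`:
`lw < lb`, `lw` is white and `lb` is black in `x_μ`, and the black set of
`x_lam` is that of `x_μ` with `lb` replaced by `lw`. -/
def IsFlip (μ lam : YoungDiagram) (lw lb : ℤ) : Prop :=
  lw < lb ∧ lw ∉ Set.range (xseq μ) ∧ lb ∈ Set.range (xseq μ) ∧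
    Set.range (xseq lam) = insert lw (Set.range (xseq μ) \ {lb})

/-- The number of black dots of `x_μ` in the interval `[a, b]`. -/
noncomputable def blackCount (μ : YoungDiagram) (a b : ℤ) : ℕ :=
  Nat.card {n : ℤ // n ∈ Set.Icc a b ∧ n ∈ Set.range (xseq μ)}

/-- The number of white dots of `x_μ` in the interval `[a, b]`. -/
noncomputable def whiteCount (μ : YoungDiagram) (a b : ℤ) : ℕ :=
  Nat.card {n : ℤ // n ∈ Set.Icc a b ∧ n ∉ Set.range (xseq μ)}

lemma rowLen_mono {lam mu : YoungDiagram} (h : lam ≤ mu) (i : ℕ) :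
    lam.rowLen i ≤ mu.rowLen i := by
  by_contra hc
  push_neg at hc
  have : (i, mu.rowLen i) ∈ lam := YoungDiagram.mem_iff_lt_rowLen.2 hc
  have h2 := YoungDiagram.mem_iff_lt_rowLen.1 ((YoungDiagram.mem_cells _).1 (h this))
  omega

lemma xseq_strictAnti (μ : YoungDiagram) : StrictAnti (xseq μ) := by
  apply strictAnti_nat_of_succ_lt
  intro n
  have := μ.rowLen_anti n (n+1) (by omega)
  unfold xseq
  push_cast
  omega

lemma exists_xseq_lt (μ : YoungDiagram) (x : ℤ) : ∃ m : ℕ, xseq μ m < x := by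
  refine ⟨max (μ.colLen 0) (x.natAbs + 1), ?_⟩
  have h0 : μ.rowLen (max (μ.colLen 0) (x.natAbs + 1)) = 0 := by
    by_contra hc
    have : (max (μ.colLen 0) (x.natAbs + 1), 0) ∈ μ :=
      YoungDiagram.mem_iff_lt_rowLen.2 (by omega)
    rw [YoungDiagram.mem_iff_lt_colLen] at this
    omega
  unfold xseq
  rw [h0]
  have h1 : x.natAbs + 1 ≤ max (μ.colLen 0) (x.natAbs + 1) := le_max_right _ _
  omega

lemma enum_unique {f g : ℕ → ℤ} (hf : StrictAnti f) (hg : StrictAnti g)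
    (h : Set.range f = Set.range g) : f = g := by
  funext n
  induction n using Nat.strong_induction_on with
  | _ n ih =>
    have h1 : f n ≤ g n := by
      have : f n ∈ Set.range g := h ▸ Set.mem_range_self n
      obtain ⟨m, hm⟩ := this
      have hmn : n ≤ m := by
        by_contra hc
        push_neg at hc
        have hfg := ih m hc
        have : m = n := hf.injective (hfg.trans hm)
        omega
      calc f n = g m := hm.symm
        _ ≤ g n := hg.antitone hmn
    have h2 : g n ≤ f n := by
      have : g n ∈ Set.range f := h.symm ▸ Set.mem_range_self n
      obtain ⟨m, hm⟩ := this
      have hmn : n ≤ m := by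
        by_contra hc
        push_neg at hc
        have hfg := ih m hc
        have : m = n := hg.injective ((hfg.symm.trans hm))
        omega
      calc g n = f m := hm.symm
        _ ≤ f n := hf.antitone hmn
    omega

structure Shifted (μ lam : YoungDiagram) (k1 k2 : ℕ) : Prop where
  hk : k1 ≤ k2
  lo : ∀ i, i < k1 → lam.rowLen i = μ.rowLen i
  hi : ∀ i, k2 < i → lam.rowLen i = μ.rowLen i
  mid : ∀ i, k1 ≤ i → i < k2 → lam.rowLen i + 1 = μ.rowLen (i+1)
  last : lam.rowLen k2 < μ.rowLen k2

namespace Shifted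

variable {μ lam : YoungDiagram} {k1 k2 : ℕ} (h : Shifted μ lam k1 k2)
include h

lemma xlo (i : ℕ) (hi : i < k1) : xseq lam i = xseq μ i := by
  unfold xseq; rw [h.lo i hi]

lemma xhi (i : ℕ) (hi : k2 < i) : xseq lam i = xseq μ i := by
  unfold xseq; rw [h.hi i hi]

lemma xmid (i : ℕ) (h1 : k1 ≤ i) (h2 : i < k2) : xseq lam i = xseq μ (i+1) := by
  have := h.mid i h1 h2
  unfold xseq
  push_cast
  omega

lemma xlast : xseq lam k2 < xseq μ k2 := by
  have := h.last
  unfold xseq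
  omega

/-- the new white value is strictly between consecutive values of `xseq μ`. -/
lemma xlast_gt : xseq μ (k2+1) < xseq lam k2 := by
  have h1 : xseq lam (k2+1) = xseq μ (k2+1) := h.xhi _ (by omega)
  have h2 := (xseq_strictAnti lam) (show k2 < k2 + 1 by omega)
  omega

lemma lw_not_mem : xseq lam k2 ∉ Set.range (xseq μ) := by
  rintro ⟨i, hi⟩
  rcases le_or_gt i k2 with hik | hik
  · have := (xseq_strictAnti μ).antitone hik
    have := h.xlast
    omega
  · have : xseq μ i ≤ xseq μ (k2+1) := (xseq_strictAnti μ).antitone (by omega)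
    have := h.xlast_gt
    omega

lemma isFlip : IsFlip μ lam (xseq lam k2) (xseq μ k1) := by
  refine ⟨?_, h.lw_not_mem, ⟨k1, rfl⟩, ?_⟩
  · have h1 : xseq μ k2 ≤ xseq μ k1 := (xseq_strictAnti μ).antitone h.hk
    have := h.xlast
    omega
  · ext x
    simp only [Set.mem_insert_iff, Set.mem_diff, Set.mem_singleton_iff, Set.mem_range]
    constructor
    · rintro ⟨i, rfl⟩
      rcases lt_trichotomy i k2 with hik | rfl | hik
      · rcases lt_or_ge i k1 with hik1 | hik1
        · right
          refine ⟨⟨i, (h.xlo i hik1).symm⟩, ?_⟩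
          rw [h.xlo i hik1]
          intro hx
          have := (xseq_strictAnti μ).injective hx
          omega
        · right
          refine ⟨⟨i+1, (h.xmid i hik1 hik).symm⟩, ?_⟩
          rw [h.xmid i hik1 hik]
          intro hx
          have := (xseq_strictAnti μ).injective hx
          omega
      · exact Or.inl rfl
      · right
        refine ⟨⟨i, (h.xhi i hik).symm⟩, ?_⟩
        rw [h.xhi i hik]
        intro hx
        have := (xseq_strictAnti μ).injective hx
        have := h.hk
        omega
    · rintro (rfl | ⟨⟨i, rfl⟩, hne⟩)
      · exact ⟨k2, rfl⟩
      · have hik1 : i ≠ k1 := fun hh => hne (by rw [hh])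
        rcases lt_trichotomy i k1 with hik | rfl | hik
        · exact ⟨i, h.xlo i hik⟩
        · omega
        · rcases le_or_gt i k2 with hik2 | hik2
          · exact ⟨i-1, by rw [h.xmid (i-1) (by omega) (by omega)]; congr 1; omega⟩
          · exact ⟨i, h.xhi i hik2⟩

end Shifted

lemma flip_unique {μ lam : YoungDiagram} {lw lb lw' lb' : ℤ}
    (h : IsFlip μ lam lw lb) (h' : IsFlip μ lam lw' lb') : lw = lw' ∧ lb = lb' := by
  obtain ⟨_, hw, hb, hr⟩ := h
  obtain ⟨_, hw', hb', hr'⟩ := h'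
  have hww : lw = lw' := by
    have : lw ∈ Set.range (xseq lam) := by rw [hr]; exact Set.mem_insert _ _
    rw [hr'] at this
    rcases this with hh | ⟨hh, _⟩
    · exact hh
    · exact absurd hh hw
  subst hww
  constructor
  · rfl
  · by_contra hne
    have : lb ∈ Set.range (xseq lam) := by
      rw [hr']
      exact Set.mem_insert_iff.2 (Or.inr ⟨hb, fun hh => hne hh⟩)
    rw [hr] at this
    rcases this with hh | ⟨_, hh⟩
    · exact hw (hh ▸ hb)
    · exact hh rfl

lemma flip_shifted {μ lam : YoungDiagram} {lw lb : ℤ} (hf : IsFlip μ lam lw lb) :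
    ∃ k1 k2, Shifted μ lam k1 k2 := by
  obtain ⟨hlt, hw, ⟨k1, hk1⟩, hr⟩ := hf
  have hex : ∃ m, xseq μ m < lw := exists_xseq_lt μ lw
  set m := Nat.find hex with hm
  have hPm : xseq μ m < lw := Nat.find_spec hex
  have hm1 : 1 ≤ m := by
    rcases Nat.eq_zero_or_pos m with h0 | h0
    · exfalso
      have : xseq μ k1 ≤ xseq μ 0 := (xseq_strictAnti μ).antitone (Nat.zero_le _)
      rw [h0] at hPm
      omega
    · exact h0
  set k2 := m - 1 with hk2def
  have hk2succ : k2 + 1 = m := by omega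
  have hgt : lw < xseq μ k2 := by
    have hnot : ¬ xseq μ k2 < lw := Nat.find_min hex (by omega)
    have hne : xseq μ k2 ≠ lw := fun hh => hw ⟨k2, hh⟩
    omega
  have hltk2 : xseq μ (k2+1) < lw := by rw [hk2succ]; exact hPm
  have hk1k2 : k1 ≤ k2 := by
    by_contra hc
    push_neg at hc
    have : xseq μ k1 ≤ xseq μ (k2+1) := (xseq_strictAnti μ).antitone (by omega)
    omega
  -- explicit strictly decreasing enumeration of the flipped set
  set h : ℕ → ℤ := fun i =>
    if i < k1 then xseq μ i else if i < k2 then xseq μ (i+1)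
    else if i = k2 then lw else xseq μ i with hdef
  have hstep : ∀ i, h (i+1) < h i := by
    intro i
    have sa := xseq_strictAnti μ
    have saa := sa.antitone
    simp only [hdef]
    split_ifs
    all_goals first
      | omega
      | exact sa (by omega)
      | exact lt_of_lt_of_le hgt (saa (by omega))
      | exact lt_of_le_of_lt (saa (by omega)) hltk2
  have hanti : StrictAnti h := strictAnti_nat_of_succ_lt hstep
  have hrange : Set.range h = insert lw (Set.range (xseq μ) \ {lb}) := by
    ext x
    simp only [Set.mem_insert_iff, Set.mem_diff, Set.mem_singleton_iff, Set.mem_range]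
    constructor
    · rintro ⟨i, rfl⟩
      simp only [hdef]
      split_ifs with a b c
      · right
        refine ⟨⟨i, rfl⟩, fun hh => ?_⟩
        rw [← hk1] at hh
        have := (xseq_strictAnti μ).injective hh
        omega
      · right
        refine ⟨⟨i+1, rfl⟩, fun hh => ?_⟩
        rw [← hk1] at hh
        have := (xseq_strictAnti μ).injective hh
        omega
      · exact Or.inl rfl
      · right
        refine ⟨⟨i, rfl⟩, fun hh => ?_⟩
        rw [← hk1] at hh
        have := (xseq_strictAnti μ).injective hh
        omega
    · rintro (rfl | ⟨⟨i, rfl⟩, hne⟩)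
      · exact ⟨k2, by simp only [hdef]; rw [if_neg (by omega), if_neg (by omega)]; simp⟩
      · have hik1 : i ≠ k1 := fun hh => hne (by rw [hh, hk1])
        rcases lt_trichotomy i k1 with hik | rfl | hik
        · exact ⟨i, by simp only [hdef]; rw [if_pos hik]⟩
        · omega
        · rcases le_or_gt i k2 with hik2 | hik2
          · refine ⟨i-1, ?_⟩
            simp only [hdef]
            rw [if_neg (by omega), if_pos (by omega)]
            congr 1
            omega
          · exact ⟨i, by simp only [hdef]; rw [if_neg (by omega), if_neg (by omega), if_neg (by omega)]⟩
  have heq : xseq lam = h := by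
    apply enum_unique (xseq_strictAnti lam) hanti
    rw [hr, hrange]
  have hxeq : ∀ i, xseq lam i = h i := fun i => by rw [heq]
  refine ⟨k1, k2, ?_, ?_, ?_, ?_, ?_⟩
  · exact hk1k2
  · intro i hik
    have := hxeq i
    simp only [hdef, if_pos hik] at this
    unfold xseq at this
    omega
  · intro i hik
    have := hxeq i
    simp only [hdef] at this
    rw [if_neg (by omega), if_neg (by omega), if_neg (by omega)] at this
    unfold xseq at this
    omega
  · intro i h1 h2
    have := hxeq i
    simp only [hdef] at this
    rw [if_neg (by omega), if_pos h2] at this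
    unfold xseq at this
    push_cast at this
    omega
  · have := hxeq k2
    simp only [hdef] at this
    rw [if_neg (by omega), if_neg (by omega)] at this
    simp only [if_pos trivial, eq_self_iff_true, if_true] at this
    have hgt' := hgt
    unfold xseq at this hgt'
    omega

lemma mem_skew_iff {μ lam : YoungDiagram} {i j : ℕ} :
    (i, j) ∈ μ.cells \ lam.cells ↔ lam.rowLen i ≤ j ∧ j < μ.rowLen i := by
  simp only [Finset.mem_sdiff, YoungDiagram.mem_cells, YoungDiagram.mem_iff_lt_rowLen]
  omega

lemma boxAdj_symm {a b : ℕ × ℕ} (h : BoxAdj a b) : BoxAdj b a := by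
  unfold BoxAdj at *; tauto

lemma chain_symm {S : Finset (ℕ × ℕ)} {a b : ℕ × ℕ}
    (h : Relation.ReflTransGen (fun x y => x ∈ S ∧ y ∈ S ∧ BoxAdj x y) a b) :
    Relation.ReflTransGen (fun x y => x ∈ S ∧ y ∈ S ∧ BoxAdj x y) b a :=
  haveI : Std.Symm (fun x y => x ∈ S ∧ y ∈ S ∧ BoxAdj x y) :=
    ⟨fun _ _ hxy => ⟨hxy.2.1, hxy.1, boxAdj_symm hxy.2.2⟩⟩
  Std.Symm.symm _ _ h

lemma chain_cross {S : Finset (ℕ × ℕ)} {a b : ℕ × ℕ}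
    (h : Relation.ReflTransGen (fun x y => x ∈ S ∧ y ∈ S ∧ BoxAdj x y) a b) :
    ∀ m, b.1 ≤ m → m < a.1 → ∃ j, (m, j) ∈ S ∧ (m + 1, j) ∈ S := by
  induction h with
  | refl => intro m h1 h2; omega
  | tail hac hstep ih =>
    rename_i mid fin
    intro m h1 h2
    rcases le_or_gt mid.1 m with hcm | hcm
    · exact ih m hcm h2
    · obtain ⟨hmidS, hfinS, hadj⟩ := hstep
      rcases hadj with ⟨hr, _⟩ | ⟨hc2, hv | hv⟩
      · omega
      · omega
      · have hm : m = fin.1 := by omega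
        refine ⟨fin.2, ?_, ?_⟩
        · rw [hm, Prod.mk.eta]; exact hfinS
        · have e : (m + 1, fin.2) = mid := by rw [hm, hv, ← hc2, Prod.mk.eta]
          rw [e]; exact hmidS

lemma hook_shifted {μ lam : YoungDiagram} (hle : lam ≤ μ)
    (hne : (μ.cells \ lam.cells).Nonempty)
    (hconn : IsConnectedBoxes (μ.cells \ lam.cells))
    (hcont : ∀ a ∈ μ.cells \ lam.cells, ∀ b ∈ μ.cells \ lam.cells,
      content a = content b → a = b) :
    ∃ k1 k2, Shifted μ lam k1 k2 := by
  classical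
  set S := μ.cells \ lam.cells with hS
  have hTne : (S.image Prod.fst).Nonempty := hne.image _
  set k1 := (S.image Prod.fst).min' hTne with hk1
  set k2 := (S.image Prod.fst).max' hTne with hk2
  have hrange : ∀ p ∈ S, k1 ≤ p.1 ∧ p.1 ≤ k2 := fun p hp =>
    ⟨Finset.min'_le _ _ (Finset.mem_image_of_mem _ hp),
     Finset.le_max' _ _ (Finset.mem_image_of_mem _ hp)⟩
  obtain ⟨a, haS, ha1⟩ : ∃ p ∈ S, p.1 = k2 := by
    have := (S.image Prod.fst).max'_mem hTne
    rw [Finset.mem_image] at this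
    obtain ⟨p, hp, hp1⟩ := this
    exact ⟨p, hp, hp1⟩
  obtain ⟨b, hbS, hb1⟩ : ∃ p ∈ S, p.1 = k1 := by
    have := (S.image Prod.fst).min'_mem hTne
    rw [Finset.mem_image] at this
    obtain ⟨p, hp, hp1⟩ := this
    exact ⟨p, hp, hp1⟩
  have hchain := hconn a haS b hbS
  have hcross : ∀ m, k1 ≤ m → m < k2 → ∃ j, (m, j) ∈ S ∧ (m + 1, j) ∈ S := by
    intro m h1 h2
    exact chain_cross hchain m (by omega) (by omega)
  have hnn : ∀ i, k1 ≤ i → i ≤ k2 → lam.rowLen i < μ.rowLen i := by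
    intro i h1 h2
    rcases eq_or_lt_of_le h2 with rfl | hlt
    · obtain ⟨ai, aj⟩ := a
      simp only at ha1
      subst ha1
      have := (mem_skew_iff).1 haS
      omega
    · obtain ⟨j, hj, _⟩ := hcross i h1 hlt
      have := (mem_skew_iff).1 hj
      omega
  have hout : ∀ i, i < k1 ∨ k2 < i → lam.rowLen i = μ.rowLen i := by
    intro i hi
    have hlei := rowLen_mono hle i
    by_contra hc
    have hlt : lam.rowLen i < μ.rowLen i := by omega
    have hmem : (i, lam.rowLen i) ∈ S := mem_skew_iff.2 ⟨le_refl _, hlt⟩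
    have := hrange _ hmem
    simp only at this
    omega
  refine ⟨k1, k2, ?_, ?_, ?_, ?_, ?_⟩
  · calc k1 = b.1 := hb1.symm
      _ ≤ k2 := (hrange b hbS).2
  · exact fun i hi => hout i (Or.inl hi)
  · exact fun i hi => hout i (Or.inr hi)
  · intro i h1 h2
    -- ≤ : from crossing
    obtain ⟨j, hj1, hj2⟩ := hcross i h1 h2
    have e1 := mem_skew_iff.1 hj1
    have e2 := mem_skew_iff.1 hj2
    have hub : lam.rowLen i + 1 ≤ μ.rowLen (i+1) := by omega
    -- ≥ : from distinct contents
    by_contra hc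
    have hlt : lam.rowLen i + 2 ≤ μ.rowLen (i+1) := by omega
    have hb1m : (i, lam.rowLen i) ∈ S :=
      mem_skew_iff.2 ⟨le_refl _, hnn i h1 (by omega)⟩
    have hb2m : (i+1, lam.rowLen i + 1) ∈ S := by
      refine mem_skew_iff.2 ⟨?_, by omega⟩
      have := lam.rowLen_anti i (i+1) (by omega)
      omega
    have := hcont _ hb1m _ hb2m (by unfold content; push_cast; ring)
    simp only [Prod.mk.injEq] at this
    omega
  · refine hnn k2 ?_ (le_refl _)
    have := (hrange b hbS)
    omega

lemma shifted_hook {μ lam : YoungDiagram} (hle : lam ≤ μ) {k1 k2 : ℕ}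
    (h : Shifted μ lam k1 k2) : IsHook (μ.cells \ lam.cells) := by
  classical
  set S := μ.cells \ lam.cells with hS
  have hnn : ∀ i, k1 ≤ i → i ≤ k2 → lam.rowLen i < μ.rowLen i := by
    intro i h1 h2
    rcases eq_or_lt_of_le h2 with rfl | hlt
    · exact h.last
    · have := h.mid i h1 hlt
      have := μ.rowLen_anti i (i+1) (by omega)
      omega
  have hrange : ∀ i j, (i, j) ∈ S → k1 ≤ i ∧ i ≤ k2 := by
    intro i j hij
    have hm := mem_skew_iff.1 hij
    by_contra hc
    push_neg at hc
    rcases lt_or_ge i k1 with hi | hi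
    · have := h.lo i hi; omega
    · have hik2 : k2 < i := by omega
      have := h.hi i hik2; omega
  -- horizontal chains within a row
  have hhor : ∀ i (d j : ℕ), (i, j) ∈ S → (i, j + d) ∈ S →
      Relation.ReflTransGen (fun x y => x ∈ S ∧ y ∈ S ∧ BoxAdj x y) (i, j + d) (i, j) := by
    intro i d
    induction d with
    | zero => intro j _ _; exact Relation.ReflTransGen.refl
    | succ n ih =>
      intro j h1 h2
      have hm1 := mem_skew_iff.1 h1
      have hm2 := mem_skew_iff.1 h2
      have hmidm : (i, j + n) ∈ S := mem_skew_iff.2 (by omega)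
      refine Relation.ReflTransGen.head ⟨h2, hmidm, ?_⟩ (ih j h1 hmidm)
      exact Or.inl ⟨rfl, Or.inr (by simp; omega)⟩
  -- connect row starts down to the base point (k2, lam.rowLen k2)
  have hbase : ∀ d i, i + d = k2 → k1 ≤ i →
      Relation.ReflTransGen (fun x y => x ∈ S ∧ y ∈ S ∧ BoxAdj x y)
        (i, lam.rowLen i) (k2, lam.rowLen k2) := by
    intro d
    induction d with
    | zero =>
      intro i hi _
      have : i = k2 := by omega
      subst this
      exact Relation.ReflTransGen.refl
    | succ n ih =>
      intro i hi hk1i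
      have hik2 : i < k2 := by omega
      have hm := h.mid i hk1i hik2
      have h1m : (i, lam.rowLen i) ∈ S :=
        mem_skew_iff.2 ⟨le_refl _, hnn i hk1i (by omega)⟩
      have hanti := lam.rowLen_anti i (i+1) (by omega)
      have h2m : (i+1, lam.rowLen i) ∈ S := mem_skew_iff.2 ⟨hanti, by omega⟩
      have h3m : (i+1, lam.rowLen (i+1)) ∈ S :=
        mem_skew_iff.2 ⟨le_refl _, hnn (i+1) (by omega) (by omega)⟩
      have step1 : (fun x y => x ∈ S ∧ y ∈ S ∧ BoxAdj x y)
          (i, lam.rowLen i) (i+1, lam.rowLen i) :=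
        ⟨h1m, h2m, Or.inr ⟨rfl, Or.inl rfl⟩⟩
      have e : lam.rowLen (i+1) + (lam.rowLen i - lam.rowLen (i+1)) = lam.rowLen i := by
        omega
      have chain2 := hhor (i+1) (lam.rowLen i - lam.rowLen (i+1)) (lam.rowLen (i+1)) h3m
        (by rw [e]; exact h2m)
      rw [e] at chain2
      exact Relation.ReflTransGen.head step1 (chain2.trans (ih (i+1) (by omega) (by omega)))
  -- every box connects to the base point
  have hconn1 : ∀ p ∈ S,
      Relation.ReflTransGen (fun x y => x ∈ S ∧ y ∈ S ∧ BoxAdj x y)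
        p (k2, lam.rowLen k2) := by
    rintro ⟨i, j⟩ hp
    obtain ⟨h1, h2⟩ := hrange i j hp
    have hm := mem_skew_iff.1 hp
    have hstart : (i, lam.rowLen i) ∈ S := mem_skew_iff.2 ⟨le_refl _, hnn i h1 h2⟩
    have e : lam.rowLen i + (j - lam.rowLen i) = j := by omega
    have chain1 := hhor i (j - lam.rowLen i) (lam.rowLen i) hstart (by rw [e]; exact hp)
    rw [e] at chain1
    exact chain1.trans (hbase (k2 - i) i (by omega) h1)
  -- max-content decreasing down rows
  have hmax : ∀ i i', k1 ≤ i → i + 1 ≤ i' → i' ≤ k2 →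
      (μ.rowLen i' : ℤ) - 1 - i' < (lam.rowLen i : ℤ) - i := by
    intro i i' hik1 h1 h2
    induction i', h1 using Nat.le_induction with
    | base =>
      have := h.mid i hik1 (by omega)
      push_cast
      omega
    | succ n hn ih =>
      have hm := h.mid n (by omega) (by omega)
      have hlt := hnn n (by omega) (by omega)
      have := ih (by omega)
      push_cast at this ⊢
      omega
  refine ⟨⟨lam, μ, hle, rfl⟩, ?_, ?_, ?_⟩
  · exact ⟨(k2, lam.rowLen k2), mem_skew_iff.2 ⟨le_refl _, h.last⟩⟩
  · intro a ha b hb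
    exact (hconn1 a ha).trans (chain_symm (hconn1 b hb))
  · rintro ⟨ai, aj⟩ ha ⟨bi, bj⟩ hb heq
    simp only [content] at heq
    have hma := mem_skew_iff.1 ha
    have hmb := mem_skew_iff.1 hb
    obtain ⟨ha1, ha2⟩ := hrange _ _ ha
    obtain ⟨hb1, hb2⟩ := hrange _ _ hb
    rcases lt_trichotomy ai bi with hab | rfl | hab
    · have := hmax ai bi ha1 (by omega) hb2
      omega
    · have hjj : aj = bj := by omega
      subst hjj
      rfl
    · have := hmax bi ai hb1 (by omega) ha2
      omega

/-- Removing a connected rim hook from `μ` corresponds bijectively to flipping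
a wb pair in the weight diagram `x_μ`: for `λ ⊆ μ`, the skew diagram `μ/λ` is a
rim hook iff `x_λ` is obtained from `x_μ` by flipping a unique wb pair. -/
theorem rim_hook_iff_flip (μ lam : YoungDiagram) (hle : lam ≤ μ) :
    IsHook (μ.cells \ lam.cells) ↔ ∃! p : ℤ × ℤ, IsFlip μ lam p.1 p.2 := by
  constructor
  · rintro ⟨hskew, hne, hconn, hcont⟩
    obtain ⟨k1, k2, hsh⟩ := hook_shifted hle hne hconn hcont
    refine ⟨(xseq lam k2, xseq μ k1), hsh.isFlip, ?_⟩
    rintro ⟨lw, lb⟩ hq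
    obtain ⟨e1, e2⟩ := flip_unique hq hsh.isFlip
    simp only [Prod.mk.injEq]
    exact ⟨e1, e2⟩
  · rintro ⟨⟨lw, lb⟩, hf, -⟩
    obtain ⟨k1, k2, hsh⟩ := flip_shifted hf
    exact shifted_hook hle hsh
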